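/- For n > 2γ and γ ∈ (0,1), it holds that g_{n,γ} · ∫_{ℝⁿ} |y|^{−(n−2γ)} (2γ|y|² − n)(1+|y|²)^{−(n+2γ+2)/2} dy = −(n−2γ) · α_{n,γ}^{1−p}, where p = (n+2γ)/(n−2γ), g_{n,γ} = Γ((n−2γ)/2)/(π^{n/2} 2^{2γ} Γ(γ)), and α_{n,γ} = 2^{(n−2γ)/2} (Γ((n+2γ)/2)/Γ((n−2γ)/2))^{(n−2γ)/(4γ)}. Equivalently, α_{n,γ}^p g_{n,γ} ∫_{ℝⁿ} |y|^{−(n−2γ)} (2γ|y|²−n)(1+|y|²)^{−(n+2γ+2)/2} dy = −α_{n,γ}(n−2γ). -/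

import Mathlib

open MeasureTheory

/-- The constant `α_{n,γ}`. -/
noncomputable def alphaConst (n : ℕ) (γ : ℝ) : ℝ :=
  2 ^ (((n:ℝ) - 2*γ)/2) *
    (Real.Gamma (((n:ℝ) + 2*γ)/2) / Real.Gamma (((n:ℝ) - 2*γ)/2)) ^ (((n:ℝ) - 2*γ)/(4*γ))

/-- The constant `g_{n,γ}`. -/
noncomputable def gConst (n : ℕ) (γ : ℝ) : ℝ :=
  Real.Gamma (((n:ℝ) - 2*γ)/2) / (Real.pi ^ ((n:ℝ)/2) * 2 ^ (2*γ) * Real.Gamma γ)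

/-!
In polar coordinates, with `t = |y|²`, a radial integral over `ℝⁿ` becomes
`π^{n/2} / Γ(n/2) · ∫₀^∞ t^{n/2-1} f(√t) dt`. For our integrand this is
`t^{γ-1} (2γt - n) (1+t)^{-(γ+n/2+1)}`, a combination of the Beta integrals
`B(a, b) = ∫₀^∞ t^{a-1} (1+t)^{-(a+b)} dt` (obtained from the usual ones on `(0,1)` by
`u = t/(1+t)`), namely `2γ B(γ+1, n/2) - n B(γ, n/2+1) = (2γ - n) B(γ, n/2)`.
So the integral is `-π^{n/2} Γ(γ) (n-2γ) / Γ((n+2γ)/2)`, and since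
`α^{p-1} = 2^{2γ} Γ((n+2γ)/2) / Γ((n-2γ)/2)` all the constants cancel.
-/

open Real Set

lemma ofReal_rpow_mul_one_sub_rpow {a b x : ℝ} (hx : x ∈ Ioo (0:ℝ) 1) :
    ((x ^ (a - 1) * (1 - x) ^ (b - 1) : ℝ) : ℂ)
      = (x : ℂ) ^ ((a : ℂ) - 1) * (1 - (x : ℂ)) ^ ((b : ℂ) - 1) := by
  rw [Complex.ofReal_mul, Complex.ofReal_cpow hx.1.le, Complex.ofReal_cpow (by linarith [hx.2])]
  push_cast
  rfl

lemma integrableOn_Ioo_rpow_mul_one_sub_rpow {a b : ℝ} (ha : 0 < a) (hb : 0 < b) :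
    IntegrableOn (fun x : ℝ => x ^ (a - 1) * (1 - x) ^ (b - 1)) (Ioo 0 1) := by
  have h := (Complex.betaIntegral_convergent (u := a) (v := b) (by simpa) (by simpa)).1
  have hre : IntegrableOn
      (fun x : ℝ => ((x : ℂ) ^ ((a : ℂ) - 1) * (1 - (x : ℂ)) ^ ((b : ℂ) - 1)).re) (Ioo 0 1) :=
    (h.mono_set Ioo_subset_Ioc_self).re
  refine hre.congr_fun (fun x hx => ?_) measurableSet_Ioo
  dsimp only
  rw [← ofReal_rpow_mul_one_sub_rpow hx, Complex.ofReal_re]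

lemma integral_Ioo_rpow_mul_one_sub_rpow {a b : ℝ} (ha : 0 < a) (hb : 0 < b) :
    ∫ x in Ioo (0:ℝ) 1, x ^ (a - 1) * (1 - x) ^ (b - 1) = Gamma a * Gamma b / Gamma (a + b) := by
  have h := Complex.betaIntegral_eq_Gamma_mul_div a b (by simpa) (by simpa)
  rw [Complex.betaIntegral, intervalIntegral.integral_of_le zero_le_one,
    integral_Ioc_eq_integral_Ioo,
    ← setIntegral_congr_fun measurableSet_Ioo (fun x hx => ofReal_rpow_mul_one_sub_rpow hx),
    integral_complex_ofReal, ← Complex.ofReal_add, Complex.Gamma_ofReal, Complex.Gamma_ofReal,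
    Complex.Gamma_ofReal] at h
  exact_mod_cast h

lemma image_div_one_add_Ioi : (fun t : ℝ => t / (1 + t)) '' Ioi 0 = Ioo 0 1 := by
  ext u
  constructor
  · rintro ⟨t, ht, rfl⟩
    have ht : (0:ℝ) < t := ht
    exact ⟨by positivity, (div_lt_one (by positivity)).2 (by linarith)⟩
  · rintro ⟨hu0, hu1⟩
    refine ⟨u / (1 - u), div_pos hu0 (by linarith), ?_⟩
    have : (1:ℝ) - u ≠ 0 := by linarith
    field_simp
    ring

lemma injOn_div_one_add_Ioi : InjOn (fun t : ℝ => t / (1 + t)) (Ioi 0) := by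
  intro s hs t ht h
  have hs : (0:ℝ) < s := hs
  have ht : (0:ℝ) < t := ht
  rw [div_eq_div_iff (by positivity) (by positivity)] at h
  linarith

lemma hasDerivAt_div_one_add {t : ℝ} (ht : 1 + t ≠ 0) :
    HasDerivAt (fun t : ℝ => t / (1 + t)) (1 / (1 + t) ^ 2) t :=
  ((hasDerivAt_id t).div ((hasDerivAt_id t).const_add 1) ht).congr_deriv (by simp)

lemma abs_deriv_smul_rpow_mul_one_sub_rpow_div_one_add {a b t : ℝ} (ht : 0 < t) :
    |1 / (1 + t) ^ 2| • ((t / (1 + t)) ^ (a - 1) * (1 - t / (1 + t)) ^ (b - 1))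
      = t ^ (a - 1) * (1 + t) ^ (-(a + b)) := by
  have h1t : (0:ℝ) < 1 + t := by linarith
  have hsub : 1 - t / (1 + t) = (1 + t)⁻¹ := by field_simp; ring
  have hexp : (1 + t) ^ (a + b) = (1 + t) ^ (a - 1) * (1 + t) ^ (b - 1) * (1 + t) ^ 2 := by
    rw [← rpow_add h1t, ← rpow_natCast, ← rpow_add h1t]
    congr 1
    push_cast
    ring
  rw [smul_eq_mul, abs_of_pos (by positivity), hsub, div_rpow ht.le h1t.le,
    inv_rpow h1t.le, rpow_neg h1t.le, hexp]
  field_simp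

lemma integrableOn_Ioi_rpow_mul_one_add_rpow {a b : ℝ} (ha : 0 < a) (hb : 0 < b) :
    IntegrableOn (fun t : ℝ => t ^ (a - 1) * (1 + t) ^ (-(a + b))) (Ioi 0) := by
  have h := integrableOn_Ioo_rpow_mul_one_sub_rpow ha hb
  rw [← image_div_one_add_Ioi, integrableOn_image_iff_integrableOn_abs_deriv_smul
    measurableSet_Ioi
    (fun t ht => (hasDerivAt_div_one_add (add_pos one_pos ht).ne').hasDerivWithinAt)
    injOn_div_one_add_Ioi] at h
  exact h.congr_fun (fun t ht => abs_deriv_smul_rpow_mul_one_sub_rpow_div_one_add ht)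
    measurableSet_Ioi

lemma integral_Ioi_rpow_mul_one_add_rpow {a b : ℝ} (ha : 0 < a) (hb : 0 < b) :
    ∫ t in Ioi (0:ℝ), t ^ (a - 1) * (1 + t) ^ (-(a + b)) = Gamma a * Gamma b / Gamma (a + b) := by
  rw [← integral_Ioo_rpow_mul_one_sub_rpow ha hb, ← image_div_one_add_Ioi,
    integral_image_eq_integral_abs_deriv_smul measurableSet_Ioi
      (fun t ht => (hasDerivAt_div_one_add (add_pos one_pos ht).ne').hasDerivWithinAt)
      injOn_div_one_add_Ioi]
  exact setIntegral_congr_fun measurableSet_Ioi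
    (fun t ht => (abs_deriv_smul_rpow_mul_one_sub_rpow_div_one_add ht).symm)

lemma integral_fun_norm_euclideanSpace {ι : Type*} [Fintype ι] [Nonempty ι] (f : ℝ → ℝ) :
    ∫ y : EuclideanSpace ℝ ι, f ‖y‖
      = π ^ ((Fintype.card ι : ℝ) / 2) / Gamma ((Fintype.card ι : ℝ) / 2) *
          ∫ t in Ioi (0:ℝ), t ^ ((Fintype.card ι : ℝ) / 2 - 1) * f (√t) := by
  set d := Fintype.card ι with hd
  have hd0 : (0:ℝ) < d := by exact_mod_cast Fintype.card_pos
  have hvol : (volume : Measure (EuclideanSpace ℝ ι)).real (Metric.ball 0 1)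
      = π ^ ((d : ℝ) / 2) / Gamma ((d : ℝ) / 2 + 1) := by
    rw [measureReal_def, EuclideanSpace.volume_ball, ENNReal.ofReal_one, one_pow, one_mul,
      ENNReal.toReal_ofReal (by positivity), ← hd, sqrt_eq_rpow, ← rpow_natCast,
      ← rpow_mul pi_pos.le]
    ring_nf
  have hsub : ∫ t in Ioi (0:ℝ), t ^ ((d : ℝ) / 2 - 1) * f (√t)
      = 2 * ∫ r in Ioi (0:ℝ), r ^ (d - 1) * f r := by
    rw [← integral_comp_rpow_Ioi_of_pos (p := 2) two_pos, ← integral_const_mul]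
    refine setIntegral_congr_fun measurableSet_Ioi (fun r (hr : 0 < r) => ?_)
    have hsq : √(r ^ (2:ℝ)) = r := by rw [rpow_two, sqrt_sq hr.le]
    have hpow : (2 * r ^ ((2:ℝ) - 1)) * (r ^ (2:ℝ)) ^ ((d : ℝ) / 2 - 1) = 2 * r ^ (d - 1) := by
      rw [← rpow_mul hr.le, mul_assoc, ← rpow_add hr, ← rpow_natCast, Nat.cast_sub
        (by exact_mod_cast hd0 : 1 ≤ d)]
      congr 2
      push_cast
      ring
    rw [smul_eq_mul, hsq, ← mul_assoc, hpow, mul_assoc]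
  have := integral_fun_norm_addHaar (volume : Measure (EuclideanSpace ℝ ι)) f
  simp only [finrank_euclideanSpace, ← hd, smul_eq_mul, nsmul_eq_mul] at this
  rw [this, hsub, hvol, Gamma_add_one (by positivity)]
  field_simp

lemma integral_Ioi_rpow_mul_sub_mul_one_add_rpow {a b : ℝ} (ha : 0 < a) (hb : 0 < b) :
    ∫ t in Ioi (0:ℝ), t ^ (a - 1) * (a * t - b) * (1 + t) ^ (-(a + b + 1))
      = (a - b) * (Gamma a * Gamma b / Gamma (a + b)) := by
  have hsplit : ∀ t ∈ Ioi (0:ℝ), t ^ (a - 1) * (a * t - b) * (1 + t) ^ (-(a + b + 1))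
      = a * (t ^ ((a + 1) - 1) * (1 + t) ^ (-((a + 1) + b)))
        - b * (t ^ (a - 1) * (1 + t) ^ (-(a + (b + 1)))) := fun t (ht : 0 < t) => by
    rw [add_sub_cancel_right, ← add_assoc, add_right_comm,
      show t ^ a = t ^ (a - 1) * t by rw [← rpow_add_one ht.ne', sub_add_cancel]]
    ring
  have hab : 0 < a + b := add_pos ha hb
  rw [setIntegral_congr_fun measurableSet_Ioi hsplit,
    integral_sub ((integrableOn_Ioi_rpow_mul_one_add_rpow (by linarith) hb).const_mul a)
      ((integrableOn_Ioi_rpow_mul_one_add_rpow ha (by linarith)).const_mul b),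
    integral_const_mul, integral_const_mul,
    integral_Ioi_rpow_mul_one_add_rpow (by linarith) hb,
    integral_Ioi_rpow_mul_one_add_rpow ha (by linarith),
    Gamma_add_one ha.ne', Gamma_add_one hb.ne', add_right_comm, ← add_assoc,
    Gamma_add_one hab.ne']
  field_simp
  ring

lemma integral_norm_rpow_mul_sub_mul_one_add_sq_rpow (n : ℕ) {γ : ℝ} (hγ : 0 < γ)
    (hn : 2 * γ < n) :
    ∫ y : EuclideanSpace ℝ (Fin n),
        ‖y‖ ^ (-((n:ℝ) - 2*γ)) * (2*γ*‖y‖^2 - (n:ℝ)) * (1 + ‖y‖^2) ^ (-(((n:ℝ) + 2*γ + 2)/2))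
      = -(π ^ ((n:ℝ)/2) * Gamma γ * ((n:ℝ) - 2*γ) / Gamma (((n:ℝ) + 2*γ)/2)) := by
  have hn0 : (0:ℝ) < n := by linarith
  have : Nonempty (Fin n) := ⟨⟨0, by exact_mod_cast hn0⟩⟩
  have hpt : ∀ t ∈ Ioi (0:ℝ),
      t ^ ((n:ℝ)/2 - 1) * (√t ^ (-((n:ℝ) - 2*γ)) * (2*γ*√t^2 - n)
          * (1 + √t^2) ^ (-(((n:ℝ) + 2*γ + 2)/2)))
        = 2 * (t ^ (γ - 1) * (γ * t - n/2) * (1 + t) ^ (-(γ + n/2 + 1))) := fun t (ht : 0 < t) => by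
    have hexp : t ^ (γ - 1) = t ^ ((n:ℝ)/2 - 1) * t ^ (1/2 * -((n:ℝ) - 2*γ)) := by
      rw [← rpow_add ht]
      ring_nf
    rw [sq_sqrt ht.le, sqrt_eq_rpow, ← rpow_mul ht.le, hexp,
      show -(((n:ℝ) + 2*γ + 2)/2) = -(γ + n/2 + 1) by ring]
    ring
  rw [integral_fun_norm_euclideanSpace (fun r => r ^ (-((n:ℝ) - 2*γ)) * (2*γ*r^2 - (n:ℝ))
      * (1 + r^2) ^ (-(((n:ℝ) + 2*γ + 2)/2))), Fintype.card_fin,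
    setIntegral_congr_fun measurableSet_Ioi hpt, integral_const_mul,
    integral_Ioi_rpow_mul_sub_mul_one_add_rpow hγ (by positivity),
    show ((n:ℝ) + 2*γ)/2 = γ + n/2 by ring]
  have := Gamma_pos_of_pos (by positivity : (0:ℝ) < n/2)
  field_simp
  ring

lemma alphaConst_rpow {n : ℕ} {γ : ℝ} (hγ : 0 < γ) (hn : 2 * γ < n) :
    alphaConst n γ ^ (((n:ℝ) + 2*γ)/((n:ℝ) - 2*γ))
      = alphaConst n γ * (2 ^ (2*γ) * (Gamma (((n:ℝ) + 2*γ)/2) / Gamma (((n:ℝ) - 2*γ)/2))) := by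
  have hd : (0:ℝ) < n - 2*γ := by linarith
  have hR : 0 < Gamma (((n:ℝ) + 2*γ)/2) / Gamma (((n:ℝ) - 2*γ)/2) :=
    div_pos (Gamma_pos_of_pos (by linarith)) (Gamma_pos_of_pos (by linarith))
  have hα : 0 < alphaConst n γ := by unfold alphaConst; positivity
  rw [show ((n:ℝ) + 2*γ)/((n:ℝ) - 2*γ) = 1 + 4*γ/((n:ℝ) - 2*γ) by field_simp; ring,
    rpow_add hα, rpow_one, alphaConst, mul_rpow (by positivity) (by positivity),
    ← rpow_mul zero_le_two, ← rpow_mul hR.le,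
    show ((n:ℝ) - 2*γ)/2 * (4*γ/((n:ℝ) - 2*γ)) = 2*γ by field_simp; ring,
    show ((n:ℝ) - 2*γ)/(4*γ) * (4*γ/((n:ℝ) - 2*γ)) = 1 by field_simp, rpow_one]

/-- `α_{n,γ}^p g_{n,γ} ∫ |y|^{−(n−2γ)} (2γ|y|²−n)(1+|y|²)^{−(n+2γ+2)/2} dy = −α_{n,γ}(n−2γ)`. -/
theorem stmt_14 (n : ℕ) (γ : ℝ) (hγ : γ ∈ Set.Ioo (0:ℝ) 1) (hn : 2*γ < (n:ℝ)) :
    alphaConst n γ ^ (((n:ℝ) + 2*γ)/((n:ℝ) - 2*γ)) * gConst n γ *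
        ∫ y : EuclideanSpace ℝ (Fin n),
          ‖y‖ ^ (-((n:ℝ) - 2*γ)) * (2*γ*‖y‖^2 - (n:ℝ)) *
            (1 + ‖y‖^2) ^ (-(((n:ℝ) + 2*γ + 2)/2))
      = -(alphaConst n γ * ((n:ℝ) - 2*γ)) := by
  rw [alphaConst_rpow hγ.1 hn, integral_norm_rpow_mul_sub_mul_one_add_sq_rpow n hγ.1 hn, gConst]
  have := Gamma_pos_of_pos hγ.1
  have := Gamma_pos_of_pos (by linarith : (0:ℝ) < ((n:ℝ) - 2*γ)/2)
  have := Gamma_pos_of_pos (by linarith [hγ.1] : (0:ℝ) < ((n:ℝ) + 2*γ)/2)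
  field_simp
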